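/- Let f : ℝ^s × ℝ^t → ℝ be pseudo-Lipschitz of order k, i.e., there is L > 0 with |f(u) − f(v)| ≤ L(1 + ‖u‖^(k−1) + ‖v‖^(k−1))‖u − v‖ for all u, v. Let X be a random variable in ℝ^s with E[‖X‖^(k−1)] < ∞. Then the marginalized function g(y) = E[f(X, y)] is pseudo-Lipschitz of order k on ℝ^t. -/

import Mathlib

/-!
Since `‖(x, y)‖ ≤ ‖x‖ + ‖y‖` and `(a + b) ^ m ≤ 2 ^ (m - 1) * (a ^ m + b ^ m)`, the
pseudo-Lipschitz bound on `‖f (x, y) - f (x, y')‖` is `‖y - y'‖` times a function of `x` that is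
affine in `‖x‖ ^ (k - 1)`. Taking expectations at `x = X` therefore only costs the moment
`E ‖X‖ ^ (k - 1)`, which enters the new constant linearly.
-/

open MeasureTheory Filter Topology

def PseudoLipschitzWith {E F : Type*} [SeminormedAddCommGroup E] [SeminormedAddCommGroup F]
    (k : ℕ) (L : ℝ) (f : E → F) : Prop :=
  ∀ x y, ‖f x - f y‖ ≤ L * (1 + ‖x‖ ^ (k - 1) + ‖y‖ ^ (k - 1)) * ‖x - y‖

namespace WithLp

variable {p : ENNReal} [Fact (1 ≤ p)] {E F : Type*} [SeminormedAddCommGroup E]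
  [SeminormedAddCommGroup F]

theorem norm_toLp_le_norm_add_norm (x : E) (y : F) : ‖toLp p (x, y)‖ ≤ ‖x‖ + ‖y‖ := by
  have hsplit : toLp p (x, y) = toLp p (x, 0) + toLp p (0, y) := by
    rw [← toLp_add, Prod.mk_add_mk, add_zero, zero_add]
  rw [hsplit, ← norm_toLp_fst p E F x, ← norm_toLp_snd p E F y]
  exact norm_add_le _ _

theorem norm_toLp_sub_toLp_same_left (x : E) (y y' : F) :
    ‖toLp p (x, y) - toLp p (x, y')‖ = ‖y - y'‖ := by
  rw [← toLp_sub, Prod.mk_sub_mk, sub_self, norm_toLp_snd]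

end WithLp

section Integral

variable {Ω E : Type*} [MeasurableSpace Ω] {μ : Measure Ω} [NormedAddCommGroup E]
  [NormedSpace ℝ E]

/-- No integrability of `f` or `g` is needed: the integrable bound makes them integrable
together, and otherwise both integrals are the junk value `0`. -/
theorem norm_integral_sub_integral_le {f g : Ω → E} {b : Ω → ℝ}
    (hf : AEStronglyMeasurable f μ) (hg : AEStronglyMeasurable g μ) (hb : Integrable b μ)
    (hfg : ∀ᵐ ω ∂μ, ‖f ω - g ω‖ ≤ b ω) :
    ‖∫ ω, f ω ∂μ - ∫ ω, g ω ∂μ‖ ≤ ∫ ω, b ω ∂μ := by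
  have hsub : Integrable (fun ω => f ω - g ω) μ := hb.mono' (hf.sub hg) hfg
  by_cases hfi : Integrable f μ
  · have hgi : Integrable g μ := (hfi.sub hsub).congr (ae_of_all _ fun ω => by simp)
    rw [← integral_sub hfi hgi]
    exact norm_integral_le_of_norm_le hb hfg
  · have hgi : ¬Integrable g μ := fun hgi =>
      hfi <| (hgi.add hsub).congr (ae_of_all _ fun ω => by simp)
    rw [integral_undef hfi, integral_undef hgi, sub_zero, norm_zero]
    exact integral_nonneg_of_ae (hfg.mono fun _ h => (norm_nonneg _).trans h)

end Integral

namespace PseudoLipschitzWith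

variable {E F : Type*} [SeminormedAddCommGroup E] [SeminormedAddCommGroup F] {k : ℕ} {L : ℝ}

theorem continuous {f : E → F} (hf : PseudoLipschitzWith k L f) : Continuous f := by
  refine continuous_iff_continuousAt.2 fun x => tendsto_iff_norm_sub_tendsto_zero.2 ?_
  have hbound : Tendsto (fun y => L * (1 + ‖y‖ ^ (k - 1) + ‖x‖ ^ (k - 1)) * ‖y - x‖) (𝓝 x)
      (𝓝 (L * (1 + ‖x‖ ^ (k - 1) + ‖x‖ ^ (k - 1)) * ‖x - x‖)) :=
    (by fun_prop : Continuous _).tendsto x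
  rw [sub_self, norm_zero, mul_zero] at hbound
  exact squeeze_zero (fun _ => norm_nonneg _) (fun y => hf y x) hbound

theorem norm_sub_le_same_left {G : Type*} [SeminormedAddCommGroup G]
    {f : WithLp 2 (E × F) → G} (hf : PseudoLipschitzWith k L f) (hL : 0 ≤ L) (x : E) (y y' : F) :
    ‖f (WithLp.toLp 2 (x, y)) - f (WithLp.toLp 2 (x, y'))‖ ≤
      L * (1 + 2 ^ (k - 2) * (2 * ‖x‖ ^ (k - 1) + ‖y‖ ^ (k - 1) + ‖y'‖ ^ (k - 1))) *
        ‖y - y'‖ := by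
  have hpow : ∀ z : F, ‖WithLp.toLp 2 (x, z)‖ ^ (k - 1) ≤
      2 ^ (k - 2) * (‖x‖ ^ (k - 1) + ‖z‖ ^ (k - 1)) := fun z => by
    calc ‖WithLp.toLp 2 (x, z)‖ ^ (k - 1) ≤ (‖x‖ + ‖z‖) ^ (k - 1) := by
          gcongr; exact WithLp.norm_toLp_le_norm_add_norm x z
      _ ≤ 2 ^ (k - 1 - 1) * (‖x‖ ^ (k - 1) + ‖z‖ ^ (k - 1)) :=
          add_pow_le (norm_nonneg x) (norm_nonneg z) _
  calc _ ≤ L * (1 + ‖WithLp.toLp 2 (x, y)‖ ^ (k - 1) + ‖WithLp.toLp 2 (x, y')‖ ^ (k - 1)) *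
        ‖y - y'‖ := by
        simpa only [WithLp.norm_toLp_sub_toLp_same_left] using
          hf (WithLp.toLp 2 (x, y)) (WithLp.toLp 2 (x, y'))
    _ ≤ _ := by
        gcongr L * ?_ * _
        linarith [hpow y, hpow y']

theorem marginal {G Ω : Type*} [NormedAddCommGroup G] [NormedSpace ℝ G] [MeasurableSpace Ω]
    {μ : Measure Ω} [IsProbabilityMeasure μ] {f : WithLp 2 (E × F) → G}
    (hf : PseudoLipschitzWith k L f) (hL : 0 ≤ L) {X : Ω → E} (hX : AEStronglyMeasurable X μ)
    (hmom : Integrable (fun ω => ‖X ω‖ ^ (k - 1)) μ) :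
    PseudoLipschitzWith k (L * 2 ^ (k - 2) * (1 + 2 * ∫ ω, ‖X ω‖ ^ (k - 1) ∂μ))
      (fun y => ∫ ω, f (WithLp.toLp 2 (X ω, y)) ∂μ) := by
  set C := ∫ ω, ‖X ω‖ ^ (k - 1) ∂μ
  have hC : 0 ≤ C := integral_nonneg fun ω => by positivity
  have hmeas (y : F) : AEStronglyMeasurable (fun ω => f (WithLp.toLp 2 (X ω, y))) μ :=
    hf.continuous.comp_aestronglyMeasurable <|
      (WithLp.prod_continuous_toLp 2 E F).comp_aestronglyMeasurable
        (hX.prodMk aestronglyMeasurable_const)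
  intro y y'
  set c : ℝ := 2 ^ (k - 2)
  have hc : 1 ≤ c := one_le_pow₀ one_le_two
  have ha : 0 ≤ ‖y‖ ^ (k - 1) + ‖y'‖ ^ (k - 1) := by positivity
  set d := ‖y - y'‖
  set b : Ω → ℝ := fun ω => 2 * L * c * d * ‖X ω‖ ^ (k - 1) +
    L * (1 + c * (‖y‖ ^ (k - 1) + ‖y'‖ ^ (k - 1))) * d
  have hbound (ω : Ω) :
      ‖f (WithLp.toLp 2 (X ω, y)) - f (WithLp.toLp 2 (X ω, y'))‖ ≤ b ω := by
    convert hf.norm_sub_le_same_left hL (X ω) y y' using 1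
    ring
  have hb : Integrable b μ := (hmom.const_mul _).add (integrable_const _)
  have hb_integral :
      ∫ ω, b ω ∂μ = L * (1 + c * (‖y‖ ^ (k - 1) + ‖y'‖ ^ (k - 1)) + 2 * c * C) * d := by
    rw [integral_add (hmom.const_mul _) (integrable_const _), integral_const_mul, integral_const,
      probReal_univ, one_smul]
    ring
  have hconst : 1 + c * (‖y‖ ^ (k - 1) + ‖y'‖ ^ (k - 1)) + 2 * c * C ≤
      c * (1 + 2 * C) * (1 + ‖y‖ ^ (k - 1) + ‖y'‖ ^ (k - 1)) := by
    nlinarith [mul_nonneg hC ha]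
  calc _ ≤ ∫ ω, b ω ∂μ :=
        norm_integral_sub_integral_le (hmeas y) (hmeas y') hb (ae_of_all _ hbound)
    _ ≤ L * (c * (1 + 2 * C) * (1 + ‖y‖ ^ (k - 1) + ‖y'‖ ^ (k - 1))) * d := by
        rw [hb_integral]; gcongr
    _ = _ := by ring

end PseudoLipschitzWith

/-- If `f : ℝ^s × ℝ^t → ℝ` is pseudo-Lipschitz of order `k` (with the Euclidean norm on the
product) and `X` is a random vector in `ℝ^s` with `E[‖X‖^(k−1)] < ∞`, then the marginalized
function `g(y) = E[f(X, y)]` is pseudo-Lipschitz of order `k` on `ℝ^t`. -/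
theorem marginal_pseudoLipschitz {s t : ℕ} {Ω : Type*} [MeasurableSpace Ω]
    (μ : Measure Ω) [IsProbabilityMeasure μ] (k : ℕ)
    (f : WithLp 2 (EuclideanSpace ℝ (Fin s) × EuclideanSpace ℝ (Fin t)) → ℝ)
    (L : ℝ) (hL : 0 < L)
    (hf : ∀ u v : WithLp 2 (EuclideanSpace ℝ (Fin s) × EuclideanSpace ℝ (Fin t)),
      |f u - f v| ≤ L * (1 + ‖u‖ ^ (k - 1) + ‖v‖ ^ (k - 1)) * ‖u - v‖)
    (X : Ω → EuclideanSpace ℝ (Fin s)) (hX : Measurable X)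
    (hmom : Integrable (fun ω => ‖X ω‖ ^ (k - 1)) μ) :
    ∃ L' > 0, ∀ y y' : EuclideanSpace ℝ (Fin t),
      |(∫ ω, f ((WithLp.equiv 2
            (EuclideanSpace ℝ (Fin s) × EuclideanSpace ℝ (Fin t))).symm (X ω, y)) ∂μ) -
        (∫ ω, f ((WithLp.equiv 2
            (EuclideanSpace ℝ (Fin s) × EuclideanSpace ℝ (Fin t))).symm (X ω, y')) ∂μ)| ≤
        L' * (1 + ‖y‖ ^ (k - 1) + ‖y'‖ ^ (k - 1)) * ‖y - y'‖ := by
  have hPL : PseudoLipschitzWith k L f := hf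
  have hmom_nonneg : 0 ≤ ∫ ω, ‖X ω‖ ^ (k - 1) ∂μ := integral_nonneg fun ω => by positivity
  exact ⟨_, by positivity, hPL.marginal hL.le hX.aestronglyMeasurable hmom⟩
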